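/- The tropical addition ℂ × ℂ ⊸ ℂ, (a,b) ↦ a⊞b, is upper semi-continuous but not lower semi-continuous: for every (a,b) ∈ ℂ² and every open set W ⊆ ℂ containing a⊞b there is a neighborhood U of (a,b) in ℂ² such that x⊞y ⊆ W for all (x,y) ∈ U; but there exists an open set V ⊆ ℂ such that {(a,b) : (a⊞b) ∩ V ≠ ∅} is not open in ℂ². -/

import Mathlib

open Classical in
/-- The shortest arc connecting `a` and `b` on the circle `{z : |z| = |a|}`
(for `|a| = |b|`, `a + b ≠ 0`): the points of the circle lying on the cone
of nonnegative combinations of `a` and `b`. -/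
noncomputable def arc (a b : ℂ) : Set ℂ :=
  {c | ‖c‖ = ‖a‖ ∧
    ∃ l m : ℝ, 0 ≤ l ∧ 0 ≤ m ∧ c = (l : ℂ) * a + (m : ℂ) * b}

open Classical in
/-- The tropical sum of two complex numbers. -/
noncomputable def tropAdd (a b : ℂ) : Set ℂ :=
  if ‖b‖ < ‖a‖ then {a}
  else if ‖a‖ < ‖b‖ then {b}
  else if a + b = 0 then {c | ‖c‖ ≤ ‖a‖}
  else arc a b

/-- Elementwise extension of the tropical addition to subsets. -/
def setTrop (A B : Set ℂ) : Set ℂ :=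
  ⋃ a ∈ A, ⋃ b ∈ B, tropAdd a b

/-!
Where `‖a‖ ≠ ‖b‖` the sum is locally the single point `a` or `b`. At `(a, -a)` it is the
closed disk of radius `‖a‖`, and nearby sums lie in slightly larger disks. On the arc branch,
every `x ⊞ y` is covered by the radial projection, onto the circle of radius `max ‖x‖ ‖y‖`, of the
segment `[x, y]` as long as that segment avoids `0`; since the parameter interval is compact,
this projection stays in `W` for all `(x, y)` near `(a, b)`. Lower semicontinuity fails at
`(1, -1)`: its sum is the closed unit disk, which meets the open one, while `(s, -1)` for
`s > 1` has sum `{s}`.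
-/

open Set Filter Topology AffineMap

section RadialProjection

variable {E : Type*} [NormedAddCommGroup E] [NormedSpace ℝ E]

noncomputable def radialProj (r : ℝ) (w : E) : E := (r / ‖w‖) • w

lemma radialProj_norm_self (w : E) : radialProj ‖w‖ w = w := by
  rcases eq_or_ne w 0 with rfl | hw
  · simp [radialProj]
  · simp [radialProj, hw]

lemma radialProj_smul_of_pos (r : ℝ) (w : E) {s : ℝ} (hs : 0 < s) :
    radialProj r (s • w) = radialProj r w := by
  rcases eq_or_ne w 0 with rfl | hw
  · simp [radialProj]
  simp only [radialProj, norm_smul, Real.norm_of_nonneg hs.le, smul_smul]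
  congr 1
  field_simp

lemma norm_radialProj {r : ℝ} (hr : 0 ≤ r) {w : E} (hw : w ≠ 0) : ‖radialProj r w‖ = r := by
  simp [radialProj, norm_smul, abs_of_nonneg hr, hw]

lemma lineMap_inv_two_eq_zero_iff {a b : E} : lineMap a b (2⁻¹ : ℝ) = 0 ↔ a + b = 0 := by
  rw [lineMap_inv_two, midpoint_eq_smul_add, smul_eq_zero]
  simp

lemma lineMap_ne_zero_of_norm_eq {a b : E} (hab : ‖a‖ = ‖b‖) (hsum : a + b ≠ 0) {t : ℝ}
    (ht : t ∈ Icc (0 : ℝ) 1) : lineMap a b t ≠ 0 := by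
  have ha : a ≠ 0 := by
    rintro rfl
    exact hsum (by simpa [eq_comm] using hab)
  intro h
  have hnorm : (1 - t) * ‖a‖ = t * ‖a‖ := by
    rw [lineMap_apply_module] at h
    have := congrArg norm (eq_neg_of_add_eq_zero_left h)
    rwa [norm_neg, norm_smul, norm_smul, Real.norm_of_nonneg (sub_nonneg.2 ht.2),
      Real.norm_of_nonneg ht.1, ← hab] at this
  have ht' : t = 2⁻¹ := by
    have := mul_right_cancel₀ (norm_ne_zero_iff.2 ha) hnorm
    linarith
  exact hsum (lineMap_inv_two_eq_zero_iff.1 (ht' ▸ h))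

lemma continuousAt_radialProj_lineMap {q₀ : (E × E) × ℝ} (h : lineMap q₀.1.1 q₀.1.2 q₀.2 ≠ 0) :
    ContinuousAt
      (fun q : (E × E) × ℝ => radialProj (max ‖q.1.1‖ ‖q.1.2‖) (lineMap q.1.1 q.1.2 q.2)) q₀ := by
  have hline : Continuous fun q : (E × E) × ℝ => lineMap q.1.1 q.1.2 q.2 := by
    fun_prop
  unfold radialProj
  refine ContinuousAt.smul ?_ hline.continuousAt
  exact ContinuousAt.div (by fun_prop) (continuous_norm.comp hline).continuousAt
    (norm_ne_zero_iff.2 h)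

end RadialProjection

lemma tropAdd_of_norm_lt_left {a b : ℂ} (h : ‖b‖ < ‖a‖) : tropAdd a b = {a} := by
  simp [tropAdd, h]

lemma tropAdd_of_norm_lt_right {a b : ℂ} (h : ‖a‖ < ‖b‖) : tropAdd a b = {b} := by
  simp [tropAdd, h, not_lt.2 h.le]

lemma tropAdd_neg (a : ℂ) : tropAdd a (-a) = Metric.closedBall 0 ‖a‖ := by
  ext; simp [tropAdd]

lemma tropAdd_of_norm_eq {a b : ℂ} (hab : ‖a‖ = ‖b‖) (hsum : a + b ≠ 0) :
    tropAdd a b = arc a b := by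
  simp [tropAdd, hab, hsum]

lemma norm_le_of_mem_tropAdd {a b c : ℂ} (hc : c ∈ tropAdd a b) : ‖c‖ ≤ max ‖a‖ ‖b‖ := by
  unfold tropAdd at hc
  split_ifs at hc
  · rw [hc]; exact le_max_left _ _
  · rw [hc]; exact le_max_right _ _
  · exact hc.trans (le_max_left _ _)
  · exact hc.1.le.trans (le_max_left _ _)

lemma radialProj_lineMap_mem_arc {a b : ℂ} {t : ℝ} (ht : t ∈ Icc (0 : ℝ) 1)
    (hw : lineMap a b t ≠ 0) : radialProj ‖a‖ (lineMap a b t) ∈ arc a b := by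
  refine ⟨norm_radialProj (norm_nonneg a) hw, ‖a‖ / ‖lineMap a b t‖ * (1 - t),
    ‖a‖ / ‖lineMap a b t‖ * t, by have := ht.2; positivity, by have := ht.1; positivity, ?_⟩
  rw [radialProj, lineMap_apply_module]
  simp only [Complex.real_smul]
  push_cast
  ring

lemma tropAdd_subset_image_radialProj {x y : ℂ} (h : ∀ t ∈ Icc (0 : ℝ) 1, lineMap x y t ≠ 0) :
    tropAdd x y ⊆ (fun t : ℝ => radialProj (max ‖x‖ ‖y‖) (lineMap x y t)) '' Icc 0 1 := by
  rcases lt_trichotomy ‖x‖ ‖y‖ with hlt | heq | hgt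
  · rw [tropAdd_of_norm_lt_right hlt, singleton_subset_iff]
    exact ⟨1, right_mem_Icc.2 zero_le_one, by simp [max_eq_right hlt.le, radialProj_norm_self]⟩
  · have hsum : x + y ≠ 0 :=
      mt lineMap_inv_two_eq_zero_iff.2 (h 2⁻¹ ⟨by norm_num, by norm_num⟩)
    rw [tropAdd_of_norm_eq heq hsum]
    rintro c ⟨hc, l, m, hl, hm, rfl⟩
    have hs : 0 < l + m := by
      refine (add_nonneg hl hm).lt_of_ne fun hs => hsum ?_
      obtain ⟨rfl, rfl⟩ : l = 0 ∧ m = 0 := by constructor <;> linarith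
      have hx : x = 0 := by simpa [eq_comm] using hc
      simpa [hx] using heq.symm
    refine ⟨m / (l + m), ⟨by positivity, div_le_one_of_le₀ (by linarith) hs.le⟩, ?_⟩
    have hline : lineMap x y (m / (l + m)) = (l + m)⁻¹ • ((l : ℂ) * x + m * y) := by
      rw [lineMap_apply_module, one_sub_div hs.ne', add_sub_cancel_right]
      simp only [Complex.real_smul]
      push_cast
      field_simp
    dsimp only
    rw [hline, radialProj_smul_of_pos _ _ (inv_pos.2 hs), ← heq, max_self, ← hc,
      radialProj_norm_self]
  · rw [tropAdd_of_norm_lt_left hgt, singleton_subset_iff]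
    exact ⟨0, left_mem_Icc.2 zero_le_one, by simp [max_eq_left hgt.le, radialProj_norm_self]⟩

lemma eventually_tropAdd_subset_of_add_eq_zero {a b : ℂ} (hsum : a + b = 0) {W : Set ℂ}
    (hW : IsOpen W) (h : tropAdd a b ⊆ W) : ∀ᶠ p in 𝓝 (a, b), tropAdd p.1 p.2 ⊆ W := by
  obtain rfl : b = -a := eq_neg_of_add_eq_zero_right hsum
  rw [tropAdd_neg] at h
  obtain ⟨δ, hδ, hball⟩ := (isCompact_closedBall (0 : ℂ) ‖a‖).exists_thickening_subset_open hW h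
  rw [thickening_closedBall hδ (norm_nonneg a)] at hball
  have hmax : ∀ᶠ p : ℂ × ℂ in 𝓝 (a, -a), max ‖p.1‖ ‖p.2‖ < δ + ‖a‖ :=
    (continuous_fst.norm.max continuous_snd.norm).continuousAt.eventually_lt continuousAt_const
      (by simpa using hδ)
  filter_upwards [hmax] with p hp c hc
  exact hball (mem_ball_zero_iff.2 ((norm_le_of_mem_tropAdd hc).trans_lt hp))

lemma eventually_tropAdd_subset_of_norm_eq {a b : ℂ} (hab : ‖a‖ = ‖b‖) (hsum : a + b ≠ 0)
    {W : Set ℂ} (hW : IsOpen W) (h : tropAdd a b ⊆ W) :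
    ∀ᶠ p in 𝓝 (a, b), tropAdd p.1 p.2 ⊆ W := by
  rw [tropAdd_of_norm_eq hab hsum] at h
  have hparam : ∀ᶠ p : ℂ × ℂ in 𝓝 (a, b), ∀ t ∈ Icc (0 : ℝ) 1,
      lineMap p.1 p.2 t ≠ 0 ∧ radialProj (max ‖p.1‖ ‖p.2‖) (lineMap p.1 p.2 t) ∈ W := by
    refine isCompact_Icc.eventually_forall_of_forall_eventually fun t ht => ?_
    have hne := lineMap_ne_zero_of_norm_eq hab hsum ht
    have hmem : radialProj (max ‖a‖ ‖b‖) (lineMap a b t) ∈ W := by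
      rw [← hab, max_self]
      exact h (radialProj_lineMap_mem_arc ht hne)
    have hline : Continuous fun q : (ℂ × ℂ) × ℝ => lineMap q.1.1 q.1.2 q.2 := by fun_prop
    have hne' : ∀ᶠ q : (ℂ × ℂ) × ℝ in 𝓝 ((a, b), t), lineMap q.1.1 q.1.2 q.2 ≠ 0 :=
      hline.continuousAt.eventually_ne hne
    have hmem' : ∀ᶠ q : (ℂ × ℂ) × ℝ in 𝓝 ((a, b), t),
        radialProj (max ‖q.1.1‖ ‖q.1.2‖) (lineMap q.1.1 q.1.2 q.2) ∈ W :=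
      (continuousAt_radialProj_lineMap (q₀ := ((a, b), t)) hne).eventually_mem (hW.mem_nhds hmem)
    exact hne'.and hmem'
  filter_upwards [hparam] with p hp
  exact (tropAdd_subset_image_radialProj fun t ht => (hp t ht).1).trans
    (image_subset_iff.2 fun t ht => (hp t ht).2)

theorem eventually_tropAdd_subset {a b : ℂ} {W : Set ℂ} (hW : IsOpen W) (h : tropAdd a b ⊆ W) :
    ∀ᶠ p in 𝓝 (a, b), tropAdd p.1 p.2 ⊆ W := by
  rcases lt_trichotomy ‖a‖ ‖b‖ with hlt | heq | hgt
  · have hb : b ∈ W := h (by simp [tropAdd_of_norm_lt_right hlt])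
    filter_upwards [(isOpen_lt continuous_fst.norm continuous_snd.norm).mem_nhds hlt,
      continuous_snd.continuousAt.preimage_mem_nhds (hW.mem_nhds hb)] with p hp hpW
    rwa [tropAdd_of_norm_lt_right hp, singleton_subset_iff]
  · by_cases hsum : a + b = 0
    · exact eventually_tropAdd_subset_of_add_eq_zero hsum hW h
    · exact eventually_tropAdd_subset_of_norm_eq heq hsum hW h
  · have ha : a ∈ W := h (by simp [tropAdd_of_norm_lt_left hgt])
    filter_upwards [(isOpen_lt continuous_snd.norm continuous_fst.norm).mem_nhds hgt,
      continuous_fst.continuousAt.preimage_mem_nhds (hW.mem_nhds ha)] with p hp hpW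
    rwa [tropAdd_of_norm_lt_left hp, singleton_subset_iff]

theorem not_isOpen_setOf_tropAdd_inter_ball_nonempty :
    ¬ IsOpen {p : ℂ × ℂ | (tropAdd p.1 p.2 ∩ Metric.ball 0 1).Nonempty} := by
  intro hopen
  have hmem : ((1 : ℂ), (-1 : ℂ)) ∈ {p : ℂ × ℂ | (tropAdd p.1 p.2 ∩ Metric.ball 0 1).Nonempty} :=
    ⟨0, by simp [tropAdd_neg], by simp⟩
  have hcurve : Tendsto (fun s : ℝ => ((s : ℂ), (-1 : ℂ))) (𝓝[>] 1) (𝓝 (1, -1)) := by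
    have : Continuous fun s : ℝ => ((s : ℂ), (-1 : ℂ)) := by fun_prop
    simpa using (this.tendsto 1).mono_left nhdsWithin_le_nhds
  obtain ⟨s, hs, c, hc, hcV⟩ :=
    (eventually_mem_nhdsWithin.and (hcurve.eventually (hopen.mem_nhds hmem))).exists
  have hs' : ‖(-1 : ℂ)‖ < ‖(s : ℂ)‖ := by
    simpa [abs_of_pos (one_pos.trans (mem_Ioi.1 hs))] using hs
  rw [tropAdd_of_norm_lt_left hs', mem_singleton_iff] at hc
  subst hc
  exact absurd (mem_ball_zero_iff.1 hcV) (not_lt.2 (by simpa using hs'.le))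

/-- the tropical addition `(a,b) ↦ a⊞b` of complex numbers is
upper semi-continuous but not lower semi-continuous. -/
theorem tropAdd_usc_not_lsc :
    (∀ a b : ℂ, ∀ W : Set ℂ, IsOpen W → tropAdd a b ⊆ W →
      ∃ U : Set (ℂ × ℂ), IsOpen U ∧ (a, b) ∈ U ∧
        ∀ p ∈ U, tropAdd p.1 p.2 ⊆ W) ∧
    ∃ V : Set ℂ, IsOpen V ∧
      ¬ IsOpen {p : ℂ × ℂ | (tropAdd p.1 p.2 ∩ V).Nonempty} := by
  refine ⟨fun a b W hW h => ?_, Metric.ball 0 1, Metric.isOpen_ball,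
    not_isOpen_setOf_tropAdd_inter_ball_nonempty⟩
  obtain ⟨U, hU, hUopen, hab⟩ := eventually_nhds_iff.1 (eventually_tropAdd_subset hW h)
  exact ⟨U, hUopen, hab, hU⟩
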